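/- Fix $p > 1$, $r_0 > 0$, $k_2 > 0$, $\theta \geq 0$, and a non-negative continuous function $k_1$ on $(0,\infty)$ with $\int_0^{r_0} k_1 < \infty$. Define for $r \in (0, r_0^p)$ the function $h(r) = \frac{k_1(r^{1/p})}{4 p r^{1-1/p}} + \frac{p-1}{p} r^{-1} - \frac{k_2 r^{-1 + (2+\theta)/p}}{4p} + \frac{k_2 r_0^{\theta} r^{-1+2/p}}{4p}$. Then for $r \in (0, r_0^p)$, $\int_{r_0^p}^{r} h(v)\,dv \leq \ln r^{(p-1)/p} - \ln r_0^{p-1}$. -/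
import Mathlib


open intervalIntegral Real

theorem stmt_2 (p r0 k2 θ : ℝ) (k1 : ℝ → ℝ)
    (hp : 1 < p) (hr0 : 0 < r0) (hk2 : 0 < k2) (hθ : 0 ≤ θ)
    (hk1cont : ContinuousOn k1 (Set.Ioi 0))
    (hk1nonneg : ∀ r ∈ Set.Ioi (0:ℝ), 0 ≤ k1 r)
    (hk1int : IntervalIntegrable k1 MeasureTheory.volume 0 r0)
    (h : ℝ → ℝ)
    (hdef : ∀ r ∈ Set.Ioo (0:ℝ) (r0 ^ p),
      h r = k1 (r ^ (1 / p)) / (4 * p * r ^ (1 - 1 / p)) + (p - 1) / p * r⁻¹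
            - k2 * r ^ (-1 + (2 + θ) / p) / (4 * p)
            + k2 * r0 ^ θ * r ^ (-1 + 2 / p) / (4 * p)) :
    ∀ r ∈ Set.Ioo (0:ℝ) (r0 ^ p),
      (∫ v in (r0 ^ p)..r, h v) ≤ Real.log (r ^ ((p - 1) / p)) - Real.log (r0 ^ (p - 1)) := by
  intro r hr
  obtain ⟨hr0', hrlt⟩ := hr
  have hp0 : 0 < p := lt_trans one_pos hp
  have hr0p : 0 < r0 ^ p := Real.rpow_pos_of_pos hr0 p
  set H : ℝ → ℝ := fun v => k1 (v ^ (1 / p)) / (4 * p * v ^ (1 - 1 / p)) + (p - 1) / p * v⁻¹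
      - k2 * v ^ (-1 + (2 + θ) / p) / (4 * p)
      + k2 * r0 ^ θ * v ^ (-1 + 2 / p) / (4 * p) with hH
  set L : ℝ → ℝ := fun v => (p - 1) / p * v⁻¹ with hL
  have hsub : Set.uIcc r (r0 ^ p) ⊆ Set.Ioi (0:ℝ) := by
    rw [Set.uIcc_of_le hrlt.le]
    intro x hx
    exact lt_of_lt_of_le hr0' hx.1
  -- continuity of H on Ioi 0
  have hHcont : ContinuousOn H (Set.Ioi 0) := by
    have hne : ∀ x ∈ Set.Ioi (0:ℝ), x ≠ 0 ∨ (True : Prop) := fun x hx => Or.inl (ne_of_gt hx)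
    have c1 : ContinuousOn (fun v : ℝ => v ^ (1/p)) (Set.Ioi 0) :=
      continuousOn_id.rpow_const (fun x hx => Or.inl (ne_of_gt hx))
    have c2 : ContinuousOn (fun v : ℝ => k1 (v ^ (1/p))) (Set.Ioi 0) :=
      hk1cont.comp c1 (fun x hx => Real.rpow_pos_of_pos hx _)
    have c3 : ContinuousOn (fun v : ℝ => v ^ (1 - 1/p)) (Set.Ioi 0) :=
      continuousOn_id.rpow_const (fun x hx => Or.inl (ne_of_gt hx))
    have c4 : ContinuousOn (fun v : ℝ => v ^ (-1 + (2+θ)/p)) (Set.Ioi 0) :=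
      continuousOn_id.rpow_const (fun x hx => Or.inl (ne_of_gt hx))
    have c5 : ContinuousOn (fun v : ℝ => v ^ (-1 + 2/p)) (Set.Ioi 0) :=
      continuousOn_id.rpow_const (fun x hx => Or.inl (ne_of_gt hx))
    have c6 : ContinuousOn (fun v : ℝ => v⁻¹) (Set.Ioi 0) :=
      continuousOn_id.inv₀ (fun x hx => ne_of_gt hx)
    apply ContinuousOn.add
    apply ContinuousOn.sub
    apply ContinuousOn.add
    · exact c2.div (continuousOn_const.mul c3) (fun x hx => by
        have := Real.rpow_pos_of_pos hx (1 - 1/p); positivity)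
    · exact continuousOn_const.mul c6
    · exact (continuousOn_const.mul c4).div_const _
    · exact (continuousOn_const.mul c5).div_const _
  have hHint : IntervalIntegrable H MeasureTheory.volume r (r0 ^ p) :=
    (hHcont.mono hsub).intervalIntegrable
  have hLcont : ContinuousOn L (Set.Ioi 0) :=
    continuousOn_const.mul (continuousOn_id.inv₀ (fun x hx => ne_of_gt hx))
  have hLint : IntervalIntegrable L MeasureTheory.volume r (r0 ^ p) :=
    (hLcont.mono hsub).intervalIntegrable
  -- h = H a.e. on the interval
  have hne : ∀ᵐ x ∂MeasureTheory.volume, x ≠ r0 ^ p := by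
    refine MeasureTheory.ae_iff.mpr ?_
    simp only [not_not]
    have : {x : ℝ | x = r0 ^ p} = {r0 ^ p} := by ext x; simp
    rw [this]
    exact MeasureTheory.measure_singleton _
  have hcong : (∫ v in (r0 ^ p)..r, h v) = ∫ v in (r0 ^ p)..r, H v := by
    apply intervalIntegral.integral_congr_ae
    filter_upwards [hne] with x hx hxmem
    rw [Set.uIoc_comm, Set.uIoc_of_le hrlt.le] at hxmem
    exact hdef x ⟨lt_trans hr0' hxmem.1, lt_of_le_of_ne hxmem.2 hx⟩
  -- L ≤ H on [r, r0^p]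
  have hmono : ∀ x ∈ Set.Icc r (r0 ^ p), L x ≤ H x := by
    intro x hx
    have hx0 : 0 < x := lt_of_lt_of_le hr0' hx.1
    have t1 : 0 ≤ k1 (x ^ (1/p)) / (4 * p * x ^ (1 - 1/p)) := by
      apply div_nonneg
      · exact hk1nonneg _ (Real.rpow_pos_of_pos hx0 _)
      · have := Real.rpow_pos_of_pos hx0 (1 - 1/p); positivity
    have hsplit : x ^ (-1 + (2+θ)/p) = x ^ (-1 + 2/p) * x ^ (θ/p) := by
      rw [← Real.rpow_add hx0]; ring_nf
    have hle : x ^ (θ/p) ≤ r0 ^ θ := by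
      calc x ^ (θ/p) ≤ (r0 ^ p) ^ (θ/p) :=
            Real.rpow_le_rpow hx0.le hx.2 (by positivity)
        _ = r0 ^ θ := by
            rw [← Real.rpow_mul hr0.le]
            congr 1
            field_simp
    have hnum : k2 * x ^ (-1 + (2+θ)/p) ≤ k2 * r0 ^ θ * x ^ (-1 + 2/p) := by
      rw [hsplit]
      calc k2 * (x ^ (-1 + 2/p) * x ^ (θ/p)) = k2 * x ^ (θ/p) * x ^ (-1 + 2/p) := by ring
        _ ≤ k2 * r0 ^ θ * x ^ (-1 + 2/p) := by
            apply mul_le_mul_of_nonneg_right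
              (mul_le_mul_of_nonneg_left hle hk2.le)
              (Real.rpow_pos_of_pos hx0 _).le
    have t2 : k2 * x ^ (-1 + (2+θ)/p) / (4 * p) ≤ k2 * r0 ^ θ * x ^ (-1 + 2/p) / (4 * p) := by
      apply div_le_div_of_nonneg_right hnum (by positivity)
    simp only [hH, hL]
    nlinarith [t1, t2]
  have hmono' : ∫ v in r..(r0 ^ p), L v ≤ ∫ v in r..(r0 ^ p), H v :=
    intervalIntegral.integral_mono_on hrlt.le hLint hHint hmono
  have hLval : (∫ v in r..(r0 ^ p), L v) = (p - 1) / p * Real.log ((r0 ^ p) / r) := by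
    rw [hL]
    rw [intervalIntegral.integral_const_mul]
    rw [integral_inv_of_pos hr0' hr0p]
  have key : (∫ v in (r0 ^ p)..r, h v) ≤ -((p - 1) / p * Real.log ((r0 ^ p) / r)) := by
    rw [hcong, intervalIntegral.integral_symm]
    linarith [hmono', hLval.symm.le]
  have hlog1 : Real.log (r ^ ((p - 1) / p)) = (p - 1) / p * Real.log r :=
    Real.log_rpow hr0' _
  have hlog2 : Real.log (r0 ^ (p - 1)) = (p - 1) * Real.log r0 :=
    Real.log_rpow hr0 _
  have hlog3 : Real.log ((r0 ^ p) / r) = p * Real.log r0 - Real.log r := by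
    rw [Real.log_div (ne_of_gt hr0p) (ne_of_gt hr0'), Real.log_rpow hr0]
  rw [hlog1, hlog2]
  rw [hlog3] at key
  have hpne : p ≠ 0 := ne_of_gt hp0
  calc (∫ v in (r0 ^ p)..r, h v) ≤ -((p - 1) / p * (p * Real.log r0 - Real.log r)) := key
    _ = (p - 1) / p * Real.log r - (p - 1) * Real.log r0 := by field_simp; ring
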